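/- The conformal plane 4-vector satisfies P₁∧P₂∧P₃∧n = p₁∧p₂∧p₃∧n − (p₂∧p₃ + p₃∧p₁ + p₁∧p₂)N, and equals d I_p n − I_p N where I_p = (p₁−p₂)∧(p₂−p₃) and d is the perpendicular foot vector from the origin to the plane (d⌋I_p = 0, d I_p = d∧I_p). -/

import Mathlib

/-! Write `Pᵢ = pᵢ + ½pᵢ² n + n̄`. In `P₁∧P₂∧P₃∧n` the `n`-components drop out and at most one `n̄`
survives, leaving `p₁∧p₂∧p₃∧n` plus three terms `pᵢ∧pⱼ∧n̄∧n = -(pᵢ∧pⱼ)N`, because Euclidean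
vectors anticommute with `n` and `n̄`. For the second form, `d⌋I_p = 0` gives `d I_p = d∧I_p`, and
`(p₁ - d)∧I_p = 0` turns this into `p₁∧I_p = p₁∧p₂∧p₃`; multiplying by `n` gives `p₁∧p₂∧p₃∧n`, and
expanding `I_p = p₂∧p₃ + p₃∧p₁ + p₁∧p₂` finishes the proof. -/

noncomputable section
open scoped RealInnerProductSpace

/-- Euclidean 3-space. -/
abbrev E3 : Type := EuclideanSpace ℝ (Fin 3)

/-- The 5-dimensional space ℝ^{4,1}: Euclidean part plus coefficients of the
null vectors n (infinity) and n̄ (origin). -/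
abbrev V5 : Type := E3 × ℝ × ℝ

/-- Symmetric bilinear form of signature (4,1):
`⟪p,q⟫` on the Euclidean part, and `n·n̄ = -1` on the null pair. -/
def B5 : LinearMap.BilinForm ℝ V5 := LinearMap.mk₂ ℝ
  (fun x y => ⟪x.1, y.1⟫ - x.2.1 * y.2.2 - x.2.2 * y.2.1)
  (fun m₁ m₂ y => by simp only [Prod.fst_add, Prod.snd_add, inner_add_left]; ring)
  (fun c m y => by simp only [Prod.smul_fst, Prod.smul_snd, smul_eq_mul, real_inner_smul_left]; ring)
  (fun m y₁ y₂ => by simp only [Prod.fst_add, Prod.snd_add, inner_add_right]; ring)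
  (fun c m y => by simp only [Prod.smul_fst, Prod.smul_snd, smul_eq_mul, real_inner_smul_right]; ring)

/-- The quadratic form of R_{4,1}. -/
def Q5 : QuadraticForm ℝ V5 := B5.toQuadraticMap

/-- The Clifford geometric algebra R_{4,1}. -/
abbrev Cl : Type := CliffordAlgebra Q5

def ι5 : V5 →ₗ[ℝ] Cl := CliffordAlgebra.ι Q5

/-- Embedding of a Euclidean vector as a grade-1 element. -/
def ev (p : E3) : Cl := ι5 (p, 0, 0)

/-- The null vector n representing infinity. -/
def nInf : Cl := ι5 (0, 1, 0)

/-- The null vector n̄ representing the origin. -/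
def nOri : Cl := ι5 (0, 0, 1)

/-- The conformal point P = p + (1/2)p² n + n̄. -/
def cpt (p : E3) : Cl := ι5 (p, ⟪p, p⟫ / 2, 1)

/-- Outer (wedge) product of two vectors (grade-1 elements): antisymmetrized
geometric product. -/
def w2 (a b : Cl) : Cl := (2:ℝ)⁻¹ • (a * b - b * a)

/-- Outer (wedge) product of three vectors. -/
def w3 (a b c : Cl) : Cl := (6:ℝ)⁻¹ •
  (a*b*c - a*c*b - b*a*c + b*c*a + c*a*b - c*b*a)

/-- Outer (wedge) product of a vector with a bivector. -/
def vwB (v B : Cl) : Cl := (2:ℝ)⁻¹ • (v * B + B * v)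

/-- Left contraction of a vector into a bivector. -/
def lcontr (v B : Cl) : Cl := (2:ℝ)⁻¹ • (v * B - B * v)

/-- The Minkowski plane bivector N = n ∧ n̄. -/
def Nb : Cl := w2 nInf nOri

/-- Outer (wedge) product of four vectors. -/
def w4 (a b c d : Cl) : Cl := (24:ℝ)⁻¹ •
  (a*b*c*d - a*b*d*c - a*c*b*d + a*c*d*b + a*d*b*c - a*d*c*b - b*a*c*d + b*a*d*c + b*c*a*d - b*c*d*a - b*d*a*c + b*d*c*a + c*a*b*d - c*a*d*b - c*b*a*d + c*b*d*a + c*d*a*b - c*d*b*a - d*a*b*c + d*a*c*b + d*b*a*c - d*b*c*a - d*c*a*b + d*c*b*a)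

theorem CliffordAlgebra.commute_ι_mul_ι_add_swap {R M : Type*} [CommRing R] [AddCommGroup M]
    [Module R M] {Q : QuadraticForm R M} (x y : M) (c : CliffordAlgebra Q) :
    Commute (ι Q x * ι Q y + ι Q y * ι Q x) c := by
  rw [CliffordAlgebra.ι_mul_ι_add_swap]
  exact Algebra.commutes _ c

theorem mul_mul_eq_neg_of_mul_eq_neg {α : Type*} [Semigroup α] [HasDistribNeg α] {a u : α}
    (h : a * u = -(u * a)) (x : α) : a * (u * x) = -(u * (a * x)) := by
  rw [← mul_assoc, h, neg_mul, mul_assoc]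

theorem B5_isSymm : LinearMap.IsSymm B5 :=
  ⟨fun x y => by simp only [B5, LinearMap.mk₂_apply, real_inner_comm, RingHom.id_apply]; ring⟩

theorem Q5_isOrtho_iff {x y : V5} : Q5.IsOrtho x y ↔ B5 x y = 0 :=
  LinearMap.BilinForm.toQuadraticMap_isOrtho B5_isSymm

theorem nInf_mul_ev (p : E3) : nInf * ev p = -(ev p * nInf) :=
  CliffordAlgebra.ι_mul_ι_comm_of_isOrtho <| Q5_isOrtho_iff.2 <| by simp [B5]

theorem nOri_mul_ev (p : E3) : nOri * ev p = -(ev p * nOri) :=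
  CliffordAlgebra.ι_mul_ι_comm_of_isOrtho <| Q5_isOrtho_iff.2 <| by simp [B5]

theorem ev_sub (p q : E3) : ev (p - q) = ev p - ev q := by
  rw [ev, ev, ev, ← map_sub, Prod.mk_sub_mk, Prod.mk_sub_mk, sub_zero]

theorem cpt_eq_ev_add (p : E3) : cpt p = ev p + (⟪p, p⟫ / 2) • nInf + nOri := by
  simp only [cpt, ev, nInf, nOri, ← map_smul, ← map_add, Prod.smul_mk, Prod.mk_add_mk]
  simp

theorem mul_eq_lcontr_add_vwB (v B : Cl) : v * B = lcontr v B + vwB v B := by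
  unfold lcontr vwB
  module

theorem vwB_sub_left (u v B : Cl) : vwB (u - v) B = vwB u B - vwB v B := by
  simp only [vwB, sub_mul, mul_sub]
  module

theorem w2_swap (a b : Cl) : w2 b a = -w2 a b := by
  unfold w2
  module

theorem w2_sub_sub (a b c : Cl) : w2 (a - b) (b - c) = w2 b c + w2 c a + w2 a b := by
  simp only [w2, sub_mul, mul_sub]
  module

theorem w3_sub_sub (a b c : Cl) : w3 a (a - b) (b - c) = w3 a b c := by
  simp only [w3, sub_mul, mul_sub]
  module

/- Multilinearity of `w4`, followed by alternation: every term with `d` or `e` in two slots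
vanishes, and the remaining terms with one `e` are rotated to put `e` third. -/
theorem w4_add_smul_add_same (a₁ a₂ a₃ d e : Cl) (r₁ r₂ r₃ : ℝ) :
    w4 (a₁ + r₁ • d + e) (a₂ + r₂ • d + e) (a₃ + r₃ • d + e) d =
      w4 a₁ a₂ a₃ d + w4 a₂ a₃ e d + w4 a₃ a₁ e d + w4 a₁ a₂ e d := by
  simp only [w4, add_mul, mul_add, smul_mul_assoc, mul_smul_comm, mul_assoc, smul_add, smul_sub]
  module

theorem vwB_w2_of_commute {a b c : Cl} (hab : Commute (a * b + b * a) c)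
    (hac : Commute (a * c + c * a) b) : vwB a (w2 b c) = w3 a b c := by
  unfold vwB w2 w3
  linear_combination (norm := skip) (12⁻¹ : ℝ) • (hab.eq - hac.eq)
  simp only [mul_add, add_mul, mul_sub, sub_mul, smul_mul_assoc, mul_smul_comm, mul_assoc,
    smul_add, smul_sub]
  module

theorem w4_eq_w3_mul_of_anticomm {a b c d : Cl} (ha : d * a = -(a * d)) (hb : d * b = -(b * d))
    (hc : d * c = -(c * d)) : w4 a b c d = w3 a b c * d := by
  simp only [w4, w3, mul_assoc, ha, hb, hc, mul_neg, neg_mul, neg_neg, smul_mul_assoc,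
    sub_mul, add_mul]
  module

theorem w4_eq_w2_mul_w2_of_anticomm {a b c d : Cl} (hca : c * a = -(a * c))
    (hcb : c * b = -(b * c)) (hda : d * a = -(a * d)) (hdb : d * b = -(b * d)) :
    w4 a b c d = w2 a b * w2 c d := by
  simp only [w4, w2, mul_assoc, hca, hcb, hda, hdb, mul_mul_eq_neg_of_mul_eq_neg hca,
    mul_mul_eq_neg_of_mul_eq_neg hcb, mul_mul_eq_neg_of_mul_eq_neg hda,
    mul_mul_eq_neg_of_mul_eq_neg hdb, mul_neg, neg_mul, neg_neg, smul_mul_assoc, mul_smul_comm,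
    sub_mul, mul_sub]
  module

theorem vwB_ev_w2_ev (p q r : E3) : vwB (ev p) (w2 (ev q) (ev r)) = w3 (ev p) (ev q) (ev r) :=
  vwB_w2_of_commute (CliffordAlgebra.commute_ι_mul_ι_add_swap _ _ _)
    (CliffordAlgebra.commute_ι_mul_ι_add_swap _ _ _)

theorem w4_ev_ev_ev_nInf (p q r : E3) :
    w4 (ev p) (ev q) (ev r) nInf = w3 (ev p) (ev q) (ev r) * nInf :=
  w4_eq_w3_mul_of_anticomm (nInf_mul_ev p) (nInf_mul_ev q) (nInf_mul_ev r)

theorem w4_ev_ev_nOri_nInf (p q : E3) :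
    w4 (ev p) (ev q) nOri nInf = -(w2 (ev p) (ev q) * Nb) := by
  rw [w4_eq_w2_mul_w2_of_anticomm (nOri_mul_ev p) (nOri_mul_ev q) (nInf_mul_ev p) (nInf_mul_ev q),
    w2_swap nInf nOri, mul_neg, Nb]

theorem w4_cpt_cpt_cpt_nInf (p₁ p₂ p₃ : E3) :
    w4 (cpt p₁) (cpt p₂) (cpt p₃) nInf =
      w4 (ev p₁) (ev p₂) (ev p₃) nInf
        - (w2 (ev p₂) (ev p₃) + w2 (ev p₃) (ev p₁) + w2 (ev p₁) (ev p₂)) * Nb := by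
  rw [cpt_eq_ev_add, cpt_eq_ev_add, cpt_eq_ev_add, w4_add_smul_add_same, w4_ev_ev_nOri_nInf,
    w4_ev_ev_nOri_nInf, w4_ev_ev_nOri_nInf, add_mul, add_mul]
  abel

theorem plane_four_vector_general (p₁ p₂ p₃ : E3)
    (Ip : Cl) (hIp : Ip = w2 (ev (p₁ - p₂)) (ev (p₂ - p₃)))
    (d : E3) (hd1 : lcontr (ev d) Ip = 0) (hd2 : vwB (ev (p₁ - d)) Ip = 0) :
    w4 (cpt p₁) (cpt p₂) (cpt p₃) nInf =
        w4 (ev p₁) (ev p₂) (ev p₃) nInf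
        - (w2 (ev p₂) (ev p₃) + w2 (ev p₃) (ev p₁) + w2 (ev p₁) (ev p₂)) * Nb ∧
    w4 (cpt p₁) (cpt p₂) (cpt p₃) nInf = ev d * Ip * nInf - Ip * Nb := by
  refine ⟨w4_cpt_cpt_cpt_nInf p₁ p₂ p₃, ?_⟩
  have hfoot : ev d * Ip = vwB (ev p₁) Ip := by
    rw [ev_sub, vwB_sub_left, sub_eq_zero] at hd2
    rw [mul_eq_lcontr_add_vwB, hd1, zero_add, hd2]
  rw [w4_cpt_cpt_cpt_nInf, hfoot, hIp, vwB_ev_w2_ev, w4_ev_ev_ev_nInf, ev_sub, ev_sub,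
    w3_sub_sub, w2_sub_sub]

/-- the plane 4-vector
P₁∧P₂∧P₃∧n = p₁∧p₂∧p₃∧n − (p₂∧p₃+p₃∧p₁+p₁∧p₂)N = d I_p n − I_p N. -/
theorem plane_four_vector (p₁ p₂ p₃ : E3)
    (Ip : Cl) (hIp : Ip = w2 (ev (p₁ - p₂)) (ev (p₂ - p₃))) (hIp0 : Ip ≠ 0)
    (d : E3) (hd1 : lcontr (ev d) Ip = 0) (hd2 : vwB (ev (p₁ - d)) Ip = 0) :
    w4 (cpt p₁) (cpt p₂) (cpt p₃) nInf =
        w4 (ev p₁) (ev p₂) (ev p₃) nInf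
        - (w2 (ev p₂) (ev p₃) + w2 (ev p₃) (ev p₁) + w2 (ev p₁) (ev p₂)) * Nb ∧
    w4 (cpt p₁) (cpt p₂) (cpt p₃) nInf = ev d * Ip * nInf - Ip * Nb :=
  plane_four_vector_general p₁ p₂ p₃ Ip hIp d hd1 hd2
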